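/- In any hoop, if a = a → b and c = c → b, then a = c. -/
import Mathlib


/-- A pocrim: commutative monoid (z, ad) with residuation operation im,
    ordered by `x ≥ y iff im x y = z`. -/
class Pocrim (M : Type*) where
  z : M
  ad : M → M → M
  im : M → M → M
  ad_assoc : ∀ x y w : M, ad (ad x y) w = ad x (ad y w)
  ad_comm : ∀ x y : M, ad x y = ad y x
  ad_zero : ∀ x : M, ad x z = x
  ge_refl : ∀ x : M, im x x = z
  ge_trans : ∀ x y w : M, im x y = z → im y w = z → im x w = z
  ge_antisymm : ∀ x y : M, im x y = z → im y x = z → x = y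
  ad_mono : ∀ x y w : M, im x y = z → im (ad x w) (ad y w) = z
  ge_zero : ∀ x : M, im x z = z
  resid : ∀ x y w : M, (im (ad x y) w = z ↔ im x (im y w) = z)

namespace Pocrim

variable {M : Type*} [Pocrim M]

/-- `ge x y` means x ≥ y, i.e. x → y = 0. -/
def ge (x y : M) : Prop := im x y = z

end Pocrim

open Pocrim

/-- A hoop is a pocrim satisfying x + (x → y) = y + (y → x). -/
class Hoop (M : Type*) extends Pocrim M where
  cwc : ∀ x y : M, ad x (im x y) = ad y (im y x)

section Aux

variable {M : Type*} [Pocrim M]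

lemma add_ge_left (x y : M) : im (ad x y) x = z := by
  have h := ad_mono y z x (Pocrim.ge_zero y)
  rwa [ad_comm y x, ad_comm z x, ad_zero] at h

lemma counit (x w : M) : im (ad (im x w) x) w = z :=
  (resid _ _ _).mpr (Pocrim.ge_refl _)

lemma ge_im (x w : M) : im w (im x w) = z :=
  (resid w x w).mp (add_ge_left w x)

lemma curry (x y w : M) : im x (im y w) = im (ad x y) w := by
  apply Pocrim.ge_antisymm
  · apply (resid _ _ _).mp
    rw [← ad_assoc]
    apply (resid _ _ _).mpr
    apply (resid _ _ _).mpr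
    exact Pocrim.ge_refl _
  · apply (resid _ _ _).mp
    apply (resid _ _ _).mp
    have h := counit (ad x y) w
    rwa [← ad_assoc] at h

end Aux

theorem hoop_halving_unique {M : Type*} [Hoop M] (a b c : M)
    (ha : a = im a b) (hc : c = im c b) : a = c := by
  have hba : im b a = z := by have h := ge_im a b; rwa [← ha] at h
  have h2c : im (ad c c) b = z := by have h := counit c b; rwa [← hc] at h
  have hda : im a (im c a) = z := ge_im c a
  have hdc : im c (im c a) = z :=
    (resid c c a).mp (Pocrim.ge_trans (ad c c) b a h2c hba)
  have him_ac : im a c = im c a := by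
    calc im a c = im a (im c b) := by rw [← hc]
      _ = im (ad a c) b := curry _ _ _
      _ = im (ad c a) b := by rw [ad_comm]
      _ = im c (im a b) := (curry _ _ _).symm
      _ = im c a := by rw [← ha]
  have key1 : ad a (im c a) = ad c (im c a) := by
    have h := Hoop.cwc a c
    rwa [him_ac] at h
  have key2 : im (im c a) a = im (im c a) c := by
    set d := im c a with hd
    calc im d a = im d (im a b) := by rw [← ha]
      _ = im (ad d a) b := curry _ _ _
      _ = im (ad a d) b := by rw [ad_comm]
      _ = im (ad c d) b := by rw [key1]
      _ = im (ad d c) b := by rw [ad_comm]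
      _ = im d (im c b) := (curry _ _ _).symm
      _ = im d c := by rw [← hc]
  calc a = ad a z := (ad_zero a).symm
    _ = ad a (im a (im c a)) := by rw [hda]
    _ = ad (im c a) (im (im c a) a) := Hoop.cwc a (im c a)
    _ = ad (im c a) (im (im c a) c) := by rw [key2]
    _ = ad c (im c (im c a)) := (Hoop.cwc c (im c a)).symm
    _ = ad c z := by rw [hdc]
    _ = c := ad_zero c
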